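/- Let A be a G-graded algebra and χ a bicharacter of G. Then the categories A-gr of graded left A-modules and A^χ-gr of graded left A^χ-modules are equivalent, via the functor sending a graded A-module M to the twisted module M^χ with action a ·^χ m = χ(|a|,|m|) a·m. -/

import Mathlib

open CategoryTheory

/-- `χ` is a bicharacter of the (additively written) abelian group `G`
with values in the units of `K`. -/
def IsBicharacter {K G : Type*} [Field K] [AddCommGroup G] (χ : G → G → Kˣ) : Prop :=
  (∀ g h k, χ g (h + k) = χ g h * χ g k) ∧ (∀ g h k, χ (g + h) k = χ g k * χ h k)

/-- The category of `G`-graded representations of a (possibly twisted) bilinear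
multiplication `μ` on a `G`-graded algebra `A`: objects are `G`-graded `K`-vector spaces
together with a unital, `μ`-multiplicative, grading-preserving action of `A`.
For `μ` the multiplication of `A` this is the category `A`-gr of graded left `A`-modules;
for `μ` the twisted multiplication it is the category `A^χ`-gr. -/
structure GrMod (K G A : Type*) [Field K] [AddCommGroup G] [DecidableEq G]
    [Ring A] [Algebra K A] (𝒜 : G → Submodule K A)
    (μ : A →ₗ[K] A →ₗ[K] A) where
  carrier : Type*
  [acg : AddCommGroup carrier]
  [mod : Module K carrier]
  ρ : A →ₗ[K] carrier →ₗ[K] carrier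
  one_act : ∀ m : carrier, ρ 1 m = m
  mul_act : ∀ (a b : A) (m : carrier), ρ (μ a b) m = ρ a (ρ b m)
  grading : G → Submodule K carrier
  [decomp : DirectSum.Decomposition grading]
  act_mem : ∀ (g h : G), ∀ a ∈ 𝒜 g, ∀ m ∈ grading h, ρ a m ∈ grading (g + h)

attribute [instance] GrMod.acg GrMod.mod GrMod.decomp

variable {K G A : Type*} [Field K] [AddCommGroup G] [DecidableEq G]
    [Ring A] [Algebra K A] {𝒜 : G → Submodule K A} {μ : A →ₗ[K] A →ₗ[K] A}

instance : Category (GrMod K G A 𝒜 μ) where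
  Hom X Y := { f : X.carrier →ₗ[K] Y.carrier //
      (∀ (a : A) (m : X.carrier), f (X.ρ a m) = Y.ρ a (f m)) ∧
      (∀ g : G, ∀ m ∈ X.grading g, f m ∈ Y.grading g) }
  id X := ⟨LinearMap.id, fun _ _ => rfl, fun _ _ hm => hm⟩
  comp {X Y Z} f g := ⟨g.1 ∘ₗ f.1,
    fun a m => by simp [f.2.1, g.2.1],
    fun gg m hm => g.2.2 gg _ (f.2.2 gg m hm)⟩
  id_comp f := Subtype.ext rfl
  comp_id f := Subtype.ext rfl
  assoc f g h := Subtype.ext rfl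

set_option linter.unusedSectionVars false

section Twist

variable [GradedAlgebra 𝒜] (τ : G → G → Kˣ)

noncomputable def twL (X : GrMod K G A 𝒜 μ) (g : G) : X.carrier →ₗ[K] X.carrier :=
  (DirectSum.toModule K G X.carrier (fun h => (τ g h : K) • (X.grading h).subtype)) ∘ₗ
    (DirectSum.decomposeLinearEquiv X.grading).toLinearMap

lemma twL_of_mem (X : GrMod K G A 𝒜 μ) {g h : G} {m : X.carrier} (hm : m ∈ X.grading h) :
    twL τ X g m = (τ g h : K) • m := by
  simp only [twL, LinearMap.comp_apply, LinearEquiv.coe_coe,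
    DirectSum.decomposeLinearEquiv_apply, DirectSum.decompose_of_mem X.grading hm]
  rw [← DirectSum.lof_eq_of K, DirectSum.toModule_lof]
  rfl

noncomputable def twρ (X : GrMod K G A 𝒜 μ) : A →ₗ[K] X.carrier →ₗ[K] X.carrier :=
  (DirectSum.toModule K G (X.carrier →ₗ[K] X.carrier)
    (fun g => (LinearMap.llcomp K X.carrier X.carrier X.carrier).flip (twL τ X g) ∘ₗ
      X.ρ ∘ₗ (𝒜 g).subtype)) ∘ₗ (DirectSum.decomposeLinearEquiv 𝒜).toLinearMap

lemma twρ_of_mem (X : GrMod K G A 𝒜 μ) {g h : G} {a : A} {m : X.carrier}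
    (ha : a ∈ 𝒜 g) (hm : m ∈ X.grading h) :
    twρ τ X a m = (τ g h : K) • X.ρ a m := by
  simp only [twρ, LinearMap.comp_apply, LinearEquiv.coe_coe,
    DirectSum.decomposeLinearEquiv_apply, DirectSum.decompose_of_mem 𝒜 ha]
  rw [← DirectSum.lof_eq_of K, DirectSum.toModule_lof]
  simp only [LinearMap.comp_apply, Submodule.coe_subtype, LinearMap.flip_apply,
    LinearMap.llcomp_apply]
  rw [twL_of_mem τ X hm, map_smul]

end Twist


section Twist2

variable [GradedAlgebra 𝒜] (τ : G → G → Kˣ)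

lemma tau_zero_left (hτ : IsBicharacter τ) (h : G) : τ 0 h = 1 := by
  have h2 := hτ.2 0 0 h
  rw [add_zero] at h2
  have : τ 0 h * τ 0 h = τ 0 h * 1 := by rw [mul_one]; exact h2.symm
  exact mul_left_cancel this

noncomputable def twObj (hτ : IsBicharacter τ) (μ' : A →ₗ[K] A →ₗ[K] A)
    (hrel : ∀ g h, ∀ a ∈ 𝒜 g, ∀ b ∈ 𝒜 h, μ' a b = (τ g h : K) • μ a b)
    (hmem : ∀ g h, ∀ a ∈ 𝒜 g, ∀ b ∈ 𝒜 h, μ a b ∈ 𝒜 (g + h))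
    (X : GrMod K G A 𝒜 μ) : GrMod K G A 𝒜 μ' where
  carrier := X.carrier
  ρ := twρ τ X
  one_act := by
    refine DirectSum.Decomposition.inductionOn X.grading (by simp) ?_ ?_
    · rintro h ⟨m, hm⟩
      rw [twρ_of_mem τ X (SetLike.one_mem_graded 𝒜) hm, X.one_act, tau_zero_left τ hτ, Units.val_one,
        one_smul]
    · intro m m' hm hm'
      rw [map_add, hm, hm']
  mul_act := by
    intro a b m
    refine DirectSum.Decomposition.inductionOn 𝒜
      (motive := fun a => ∀ b m, twρ τ X (μ' a b) m = twρ τ X a (twρ τ X b m))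
      (by intro b m; simp only [LinearMap.map_zero, LinearMap.zero_apply]) ?_ ?_ a b m
    · rintro g ⟨a, ha⟩ b m
      refine DirectSum.Decomposition.inductionOn 𝒜
        (motive := fun b => ∀ m, twρ τ X (μ' a b) m = twρ τ X a (twρ τ X b m))
        (by intro m; simp only [LinearMap.map_zero, LinearMap.zero_apply]) ?_ ?_ b m
      · rintro h ⟨b, hb⟩ m
        refine DirectSum.Decomposition.inductionOn X.grading
          (motive := fun m => twρ τ X (μ' a b) m = twρ τ X a (twρ τ X b m))
          (by simp only [LinearMap.map_zero, LinearMap.zero_apply]) ?_ ?_ m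
        · rintro k ⟨m, hm⟩
          have hab : μ a b ∈ 𝒜 (g + h) := hmem g h a ha b hb
          have hbm : X.ρ b m ∈ X.grading (h + k) := X.act_mem h k b hb m hm
          rw [hrel g h a ha b hb, map_smul, LinearMap.smul_apply,
            twρ_of_mem τ X hab hm, X.mul_act, twρ_of_mem τ X hb hm, map_smul,
            twρ_of_mem τ X ha hbm, smul_smul, smul_smul]
          congr 1
          rw [hτ.1 g h k, hτ.2 g h k]
          push_cast
          ring
        · intro m m' h1 h2
          simp only [map_add, h1, h2]
      · intro b b' h1 h2 m
        simp only [map_add, LinearMap.add_apply, h1, h2]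
    · intro a a' h1 h2 b m
      simp only [map_add, LinearMap.add_apply, h1, h2]
  grading := X.grading
  decomp := X.decomp
  act_mem := fun g h a ha m hm => by
    rw [twρ_of_mem τ X ha hm]
    exact Submodule.smul_mem _ _ (X.act_mem g h a ha m hm)

end Twist2

section Twist3

variable [GradedAlgebra 𝒜] (τ : G → G → Kˣ)

lemma tw_map_comm (hτ : IsBicharacter τ) (μ' : A →ₗ[K] A →ₗ[K] A)
    (hrel : ∀ g h, ∀ a ∈ 𝒜 g, ∀ b ∈ 𝒜 h, μ' a b = (τ g h : K) • μ a b)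
    (hmem : ∀ g h, ∀ a ∈ 𝒜 g, ∀ b ∈ 𝒜 h, μ a b ∈ 𝒜 (g + h))
    {X Y : GrMod K G A 𝒜 μ} (f : X ⟶ Y) (a : A) (m : X.carrier) :
    f.1 (twρ τ X a m) = twρ τ Y a (f.1 m) := by
  refine DirectSum.Decomposition.inductionOn 𝒜
    (motive := fun a => ∀ m, f.1 (twρ τ X a m) = twρ τ Y a (f.1 m))
    (by intro m; simp only [LinearMap.map_zero, LinearMap.zero_apply]) ?_ ?_ a m
  · rintro g ⟨a, ha⟩ m
    refine DirectSum.Decomposition.inductionOn X.grading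
      (motive := fun m => f.1 (twρ τ X a m) = twρ τ Y a (f.1 m))
      (by simp only [LinearMap.map_zero, LinearMap.zero_apply]) ?_ ?_ m
    · rintro h ⟨m, hm⟩
      rw [twρ_of_mem τ X ha hm, map_smul, f.2.1,
        twρ_of_mem τ Y ha (f.2.2 h m hm)]
    · intro m m' h1 h2
      simp only [map_add, h1, h2]
  · intro a a' h1 h2 m
    simp only [map_add, LinearMap.add_apply, h1, h2]

noncomputable def twFunc (hτ : IsBicharacter τ) (μ' : A →ₗ[K] A →ₗ[K] A)
    (hrel : ∀ g h, ∀ a ∈ 𝒜 g, ∀ b ∈ 𝒜 h, μ' a b = (τ g h : K) • μ a b)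
    (hmem : ∀ g h, ∀ a ∈ 𝒜 g, ∀ b ∈ 𝒜 h, μ a b ∈ 𝒜 (g + h)) :
    GrMod K G A 𝒜 μ ⥤ GrMod K G A 𝒜 μ' where
  obj X := twObj τ hτ μ' hrel hmem X
  map {X Y} f := ⟨f.1, tw_map_comm τ hτ μ' hrel hmem f, fun g m hm => f.2.2 g m hm⟩
  map_id X := Subtype.ext rfl
  map_comp f g := Subtype.ext rfl

lemma twρ_twρ (τ₂ : G → G → Kˣ) (h12 : ∀ g h, (τ₂ g h : K) * τ g h = 1)
    (hτ : IsBicharacter τ) (μ' : A →ₗ[K] A →ₗ[K] A)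
    (hrel : ∀ g h, ∀ a ∈ 𝒜 g, ∀ b ∈ 𝒜 h, μ' a b = (τ g h : K) • μ a b)
    (hmem : ∀ g h, ∀ a ∈ 𝒜 g, ∀ b ∈ 𝒜 h, μ a b ∈ 𝒜 (g + h))
    (X : GrMod K G A 𝒜 μ) (a : A) (m : X.carrier) :
    twρ τ₂ (twObj τ hτ μ' hrel hmem X) a m = X.ρ a m := by
  refine DirectSum.Decomposition.inductionOn 𝒜
    (motive := fun a => ∀ m : X.carrier, twρ τ₂ (twObj τ hτ μ' hrel hmem X) a m = X.ρ a m)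
    (by intro m; simp only [LinearMap.map_zero, LinearMap.zero_apply]; rfl) ?_ ?_ a m
  · rintro g ⟨a, ha⟩ m
    refine DirectSum.Decomposition.inductionOn X.grading
      (motive := fun m : X.carrier => twρ τ₂ (twObj τ hτ μ' hrel hmem X) a m = X.ρ a m)
      (by simp only [LinearMap.map_zero, LinearMap.zero_apply]; exact LinearMap.map_zero _) ?_ ?_ m
    · rintro h ⟨m, hm⟩
      have h1 : twρ τ₂ (twObj τ hτ μ' hrel hmem X) a m
          = (τ₂ g h : K) • twρ τ X a m :=
        twρ_of_mem τ₂ (twObj τ hτ μ' hrel hmem X) ha hm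
      rw [h1, twρ_of_mem τ X ha hm, smul_smul, h12 g h, one_smul]
    · intro m m' h1 h2
      simp only [map_add, h1, h2]
      exact (map_add (twρ τ₂ (twObj τ hτ μ' hrel hmem X) a) m m').trans (congrArg₂ (· + ·) h1 h2)
  · intro a a' h1 h2 m
    simp only [map_add, LinearMap.add_apply, h1, h2]
    exact congrArg₂ (· + ·) (h1 m) (h2 m)

end Twist3

/-- Let `A` be a `G`-graded algebra and `χ` a bicharacter of `G`.
Then the category `A`-gr of graded left `A`-modules is equivalent to the category
`A^χ`-gr of graded left modules over the twisted algebra `A^χ` (whose multiplication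
`mulχ` is determined by `a ·^χ b = χ(|a|,|b|) • (a*b)` on homogeneous elements),
via an equivalence whose functor sends a graded `A`-module `M` to the twisted module
`M^χ` with the same underlying graded space and the action
`a ·^χ m = χ(|a|,|m|) • (a • m)` on homogeneous elements. -/
theorem stmt_2 [CharZero K] [GradedAlgebra 𝒜]
    (χ : G → G → Kˣ) (hχ : IsBicharacter χ)
    (mulχ : A →ₗ[K] A →ₗ[K] A)
    (hmulχ : ∀ (g h : G), ∀ a ∈ 𝒜 g, ∀ b ∈ 𝒜 h, mulχ a b = (χ g h : K) • (a * b)) :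
    ∃ e : GrMod K G A 𝒜 (LinearMap.mul K A) ≌ GrMod K G A 𝒜 mulχ,
      ∀ X : GrMod K G A 𝒜 (LinearMap.mul K A),
        ∃ hc : (e.functor.obj X).carrier = X.carrier,
          (∀ (g : G) (m : X.carrier),
            (cast hc.symm m ∈ (e.functor.obj X).grading g) ↔ m ∈ X.grading g) ∧
          (∀ (g h : G), ∀ a ∈ 𝒜 g, ∀ m ∈ X.grading h,
            (e.functor.obj X).ρ a (cast hc.symm m)
              = cast hc.symm ((χ g h : K) • X.ρ a m)) := by
  set χ' : G → G → Kˣ := fun g h => (χ g h)⁻¹ with hχ'def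
  have hχ' : IsBicharacter χ' := ⟨fun g h k => by simp only [hχ'def, hχ.1 g h k, mul_inv],
    fun g h k => by simp only [hχ'def, hχ.2 g h k, mul_inv]⟩
  have h12 : ∀ g h, (χ' g h : K) * χ g h = 1 := fun g h => Units.inv_mul _
  have h21 : ∀ g h, (χ g h : K) * χ' g h = 1 := fun g h => Units.mul_inv _
  have hrel₁ : ∀ g h, ∀ a ∈ 𝒜 g, ∀ b ∈ 𝒜 h,
      mulχ a b = (χ g h : K) • (LinearMap.mul K A) a b :=
    fun g h a ha b hb => hmulχ g h a ha b hb
  have hmem₁ : ∀ g h, ∀ a ∈ 𝒜 g, ∀ b ∈ 𝒜 h, (LinearMap.mul K A) a b ∈ 𝒜 (g + h) :=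
    fun g h a ha b hb => SetLike.mul_mem_graded ha hb
  have hrel₂ : ∀ g h, ∀ a ∈ 𝒜 g, ∀ b ∈ 𝒜 h,
      (LinearMap.mul K A) a b = (χ' g h : K) • mulχ a b := by
    intro g h a ha b hb
    rw [hmulχ g h a ha b hb, smul_smul, h12 g h, one_smul]
    rfl
  have hmem₂ : ∀ g h, ∀ a ∈ 𝒜 g, ∀ b ∈ 𝒜 h, mulχ a b ∈ 𝒜 (g + h) := by
    intro g h a ha b hb
    rw [hmulχ g h a ha b hb]
    exact Submodule.smul_mem _ _ (SetLike.mul_mem_graded ha hb)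
  refine ⟨CategoryTheory.Equivalence.mk (twFunc χ hχ mulχ hrel₁ hmem₁)
      (twFunc χ' hχ' (LinearMap.mul K A) hrel₂ hmem₂)
      (NatIso.ofComponents (fun X =>
        ⟨⟨LinearMap.id,
            fun a m => (twρ_twρ χ χ' h12 hχ mulχ hrel₁ hmem₁ X a m).symm,
            fun g m hm => hm⟩,
          ⟨LinearMap.id,
            fun a m => twρ_twρ χ χ' h12 hχ mulχ hrel₁ hmem₁ X a m,
            fun g m hm => hm⟩,
          Subtype.ext rfl, Subtype.ext rfl⟩) (fun f => Subtype.ext rfl))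
      (NatIso.ofComponents (fun Y =>
        ⟨⟨LinearMap.id,
            fun a m => twρ_twρ χ' χ h21 hχ' (LinearMap.mul K A) hrel₂ hmem₂ Y a m,
            fun g m hm => hm⟩,
          ⟨LinearMap.id,
            fun a m => (twρ_twρ χ' χ h21 hχ' (LinearMap.mul K A) hrel₂ hmem₂ Y a m).symm,
            fun g m hm => hm⟩,
          Subtype.ext rfl, Subtype.ext rfl⟩) (fun f => Subtype.ext rfl)), ?_⟩
  intro X
  refine ⟨rfl, fun g m => Iff.rfl, ?_⟩
  intro g h a ha m hm
  exact twρ_of_mem χ X ha hm
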